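/- arXiv:2509.23349 — 2 statements merged into one kernel-verified Lean document; each statement's English description precedes it below -/
import Mathlib

section
/- Let G and H be finite isoclinic groups. If G is a GVZ-group, then H is a GVZ-group. -/
set_option autoImplicit false

open CategoryTheory

noncomputable section

/-- The (quasi-)center of a character: `Z(χ) = {g | |χ(g)| = χ(1)}`. -/
def charCenter {G : Type} [Group G] (χ : G → ℂ) : Set G :=
  {g | ((‖χ g‖ : ℝ) : ℂ) = χ 1}

/-- A character is of central type if it vanishes off its center. -/
def IsCentralType {G : Type} [Group G] (χ : G → ℂ) : Prop :=
  ∀ g : G, g ∉ charCenter χ → χ g = 0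

/-- `χ : G → ℂ` is an irreducible complex character of `G`. -/
def IsIrrChar (G : Type) [Group G] (χ : G → ℂ) : Prop :=
  ∃ V : FDRep ℂ G, Simple V ∧ χ = V.character

/-- `G` is a GVZ-group: every irreducible complex character is of central type. -/
def IsGVZ (G : Type) [Group G] : Prop :=
  ∀ χ : G → ℂ, IsIrrChar G χ → IsCentralType χ

open scoped commutatorElement in
/-- Two groups are isoclinic if there are compatible isomorphisms between their
central quotients and their derived subgroups. -/
def Isoclinic (G H : Type) [Group G] [Group H] : Prop :=
  ∃ (θ : (G ⧸ Subgroup.center G) ≃* (H ⧸ Subgroup.center H))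
    (φ : commutator G ≃* commutator H),
    ∀ (g₁ g₂ : G) (h₁ h₂ : H),
      θ (g₁ : G ⧸ Subgroup.center G) = (h₁ : H ⧸ Subgroup.center H) →
      θ (g₂ : G ⧸ Subgroup.center G) = (h₂ : H ⧸ Subgroup.center H) →
      (φ ⟨⁅g₁, g₂⁆,
          Subgroup.commutator_mem_commutator (Subgroup.mem_top g₁) (Subgroup.mem_top g₂)⟩ : H)
        = ⁅h₁, h₂⁆

/-!
Let `U ≤ G × H` be the fibre product `{(g, h) | θ(g Z(G)) = h Z(H)}` with projections `π` and
`σ`. Both are onto, `σ` maps `ker π` into `Z(H)`, and `⁅U, U⁆` lies in the graph of `φ`, so it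
meets `ker π` trivially. For an irreducible representation `W` of `H` with central character
`ζ`, the character `u ↦ ζ(σ u)⁻¹` of `ker π` therefore extends to a linear character `μ` of `U`.
Then `u ↦ μ(u) W(σ u)` is trivial on `ker π` and descends to a representation `V` of `G` whose
operators are those of `W` up to scalars, so `V` is irreducible. Its character satisfies
`χ(π u) = μ(u) ψ(σ u)` with `|μ(u)| = 1`, hence `ψ` vanishes off `Z(ψ)` because `χ` vanishes
off `Z(χ)`.
-/

instance : DivisibleBy (Additive ℂˣ) ℤ :=
  divisibleByOfSMulRightSurj _ _ fun {n} hn a => by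
    let z : ℂ := Complex.log (a.toMul : ℂ) / n
    refine ⟨.ofMul (.mk0 (Complex.exp z) (Complex.exp_ne_zero z)), Units.ext ?_⟩
    change ((Units.mk0 (Complex.exp z) (Complex.exp_ne_zero z) ^ n : ℂˣ) : ℂ) = (a.toMul : ℂ)
    rw [Units.val_zpow_eq_zpow_val, Units.val_mk0, ← Complex.exp_int_mul,
      mul_div_cancel₀ _ (Int.cast_ne_zero.mpr hn), Complex.exp_log (Units.ne_zero _)]

theorem MonoidHom.exists_extension_of_disjoint_commutator {P C : Type*} [Group P] [CommGroup C]
    [DivisibleBy (Additive C) ℤ] {K : Subgroup P} (hK : Disjoint K (commutator P)) (ν : K →* C) :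
    ∃ μ : P →* C, ∀ k : K, μ k = ν k := by
  set ι : K →* Abelianization P := Abelianization.of.comp K.subtype
  have hι : Function.Injective ι := by
    rw [injective_iff_map_eq_one]
    intro k hk
    have hk' : (k : P) ∈ commutator P := by rw [← Abelianization.ker_of]; exact hk
    exact Subtype.ext (Subgroup.disjoint_def.mp hK k.2 hk')
  obtain ⟨μ, hμ⟩ := (Module.Baer.of_divisible (Additive C)).extension_property_addMonoidHom
    (MonoidHom.toAdditive ι.range.subtype) Subtype.val_injective
    (MonoidHom.toAdditive (ν.comp (MonoidHom.ofInjective hι).symm.toMonoidHom))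
  refine ⟨(MonoidHom.toAdditive.symm μ).comp Abelianization.of, fun k => ?_⟩
  have := DFunLike.congr_fun hμ (.ofMul (MonoidHom.ofInjective hι k))
  simp only [AddMonoidHom.coe_comp, coe_toAdditive, Subgroup.coe_subtype, Function.comp_apply,
    toMul_ofMul, MulEquiv.toMonoidHom_eq_coe, toAdditive_apply_apply, coe_comp, coe_coe,
    MulEquiv.symm_apply_apply] at this
  exact congrArg Additive.toMul this

namespace Representation

variable {k G H X : Type*} [Field k] [Group G] [Group H] [AddCommGroup X] [Module k X]

def twist (μ : G →* kˣ) (ρ : Representation k G X) : Representation k G X where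
  toFun g := (μ g : k) • ρ g
  map_one' := by simp
  map_mul' g h := by simp only [map_mul, Units.val_mul, smul_mul_smul_comm]

theorem twist_apply (μ : G →* kˣ) (ρ : Representation k G X) (g : G) :
    twist μ ρ g = (μ g : k) • ρ g := rfl

theorem exists_comp_eq_of_surjective {U : Type*} [Group U] (π : U →* G)
    (hπ : Function.Surjective π) (ρ : Representation k U X) (hρ : ∀ u ∈ π.ker, ρ u = 1) :
    ∃ ρ' : Representation k G X, ∀ u, ρ' (π u) = ρ u := by
  have : IsTrivial (ρ.comp π.ker.subtype) := ⟨fun u => hρ u u.2⟩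
  refine ⟨(ρ.ofQuotient π.ker).comp
    (QuotientGroup.quotientKerEquivOfSurjective π hπ).symm.toMonoidHom, fun u => ?_⟩
  have hu : (QuotientGroup.quotientKerEquivOfSurjective π hπ).symm (π u) = u :=
    MulEquiv.symm_apply_eq _ |>.mpr rfl
  rw [MonoidHom.comp_apply, MulEquiv.toMonoidHom_eq_coe, MonoidHom.coe_coe, hu]
  rfl

theorem IntertwiningMap.comp_eq_of_forall_exists_smul {ρ : Representation k G X}
    {σ : Representation k H X} (hσρ : ∀ h, ∃ g, ∃ c : k, σ h = c • ρ g)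
    (f : IntertwiningMap ρ ρ) (h : H) : f.toLinearMap ∘ₗ σ h = σ h ∘ₗ f.toLinearMap := by
  obtain ⟨g, c, hc⟩ := hσρ h
  rw [hc, LinearMap.comp_smul, LinearMap.smul_comp, f.isIntertwining' g]

def intertwiningMapSelfEquiv (ρ : Representation k G X) (σ : Representation k H X)
    (hρσ : ∀ g, ∃ h, ∃ c : k, ρ g = c • σ h) (hσρ : ∀ h, ∃ g, ∃ c : k, σ h = c • ρ g) :
    IntertwiningMap ρ ρ ≃ₗ[k] IntertwiningMap σ σ where
  toFun f := ⟨f.toLinearMap, f.comp_eq_of_forall_exists_smul hσρ⟩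
  invFun f := ⟨f.toLinearMap, f.comp_eq_of_forall_exists_smul hρσ⟩
  map_add' _ _ := rfl
  map_smul' _ _ := rfl
  left_inv _ := rfl
  right_inv _ := rfl

theorem exists_centralCharacter (ρ : Representation k G X)
    (hρ : Module.finrank k (IntertwiningMap ρ ρ) = 1) :
    ∃ ζ : Subgroup.center G →* k, ∀ z : Subgroup.center G, ρ z = ζ z • 1 := by
  have hid : IntertwiningMap.id ρ ≠ 0 := by
    have := Module.nontrivial_of_finrank_eq_succ hρ
    obtain ⟨f, hf⟩ := exists_ne (0 : IntertwiningMap ρ ρ)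
    intro h0
    refine hf (IntertwiningMap.ext (LinearMap.ext fun x => ?_))
    have hx : x = 0 := DFunLike.congr_fun h0 x
    simp [hx]
  have hscalar (z : Subgroup.center G) : ∃ c : k, ρ z = c • 1 := by
    let T : IntertwiningMap ρ ρ := ⟨ρ z, fun g => by
      simp only [← Module.End.mul_eq_comp, ← map_mul, Subgroup.mem_center_iff.mp z.2 g]⟩
    obtain ⟨c, hc⟩ := (finrank_eq_one_iff_of_nonzero' _ hid).mp hρ T
    exact ⟨c, congrArg IntertwiningMap.toLinearMap hc.symm⟩
  choose ζ hζ using hscalar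
  have hinj :=
    smul_left_injective k (m := (1 : Module.End k X)) fun h => hid (IntertwiningMap.ext h)
  refine ⟨{ toFun := ζ, map_one' := hinj ?_, map_mul' := fun z w => hinj ?_ }, hζ⟩
  · change ζ 1 • (1 : Module.End k X) = (1 : k) • 1
    rw [← hζ, OneMemClass.coe_one, map_one, one_smul]
  · change ζ (z * w) • (1 : Module.End k X) = (ζ z * ζ w) • 1
    rw [← hζ, Subgroup.coe_mul, map_mul, hζ, hζ, smul_mul_smul_comm, one_mul]

end Representation

theorem FDRep.simple_of_iff_finrank_intertwiningMap_self_eq_one.{u} {k G X : Type u} [Field k]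
    [IsAlgClosed k] [Group G] [Finite G] [NeZero (Nat.card G : k)] [AddCommGroup X] [Module k X]
    [FiniteDimensional k X] (ρ : Representation k G X) :
    Simple (FDRep.of ρ) ↔ Module.finrank k (ρ.IntertwiningMap ρ) = 1 := by
  rw [FDRep.simple_iff_end_is_rank_one,
    ((FDRep.forget₂HomLinearEquiv _ _).symm.trans (Rep.homLinearEquiv _ _)).finrank_eq]
  rfl

theorem FDRep.exists_simple_character_eq_mul {U : Type*} {G H : Type} [Group U] [Group G] [Group H]
    [Finite G] [Finite H] {π : U →* G} {σ : U →* H} (hπ : Function.Surjective π)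
    (hσ : Function.Surjective σ) (hker : ∀ u ∈ π.ker, σ u ∈ Subgroup.center H)
    (hdisj : Disjoint π.ker (commutator U)) (W : FDRep ℂ H) [Simple W] :
    ∃ (V : FDRep ℂ G) (μ : U →* ℂˣ), Simple V ∧
      ∀ u, V.character (π u) = μ u * W.character (σ u) := by
  have hW : Module.finrank ℂ (Representation.IntertwiningMap W.ρ W.ρ) = 1 :=
    (simple_of_iff_finrank_intertwiningMap_self_eq_one W.ρ).mp ‹Simple W›
  obtain ⟨ζ, hζ⟩ := Representation.exists_centralCharacter W.ρ hW
  let ν : π.ker →* ℂˣ :=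
    (ζ.toHomUnits.comp ((σ.comp π.ker.subtype).codRestrict _ fun u => hker u u.2))⁻¹
  obtain ⟨μ, hμ⟩ := MonoidHom.exists_extension_of_disjoint_commutator hdisj ν
  obtain ⟨ρ, hρ⟩ := Representation.exists_comp_eq_of_surjective π hπ
      (Representation.twist μ (W.ρ.comp σ)) fun u hu => by
    have hνζ : (ν ⟨u, hu⟩ : ℂ) * ζ ⟨σ u, hker u hu⟩ = 1 := Units.inv_mul _
    change (μ u : ℂ) • W.ρ (σ u) = 1
    rw [show W.ρ (σ u) = _ from hζ ⟨σ u, hker u hu⟩, hμ ⟨u, hu⟩, smul_smul, hνζ, one_smul]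
  have hV : Module.finrank ℂ (ρ.IntertwiningMap ρ) = 1 := by
    refine (Representation.intertwiningMapSelfEquiv ρ W.ρ (fun g => ?_) (fun h => ?_)).finrank_eq
      |>.trans hW
    · obtain ⟨u, rfl⟩ := hπ g
      exact ⟨σ u, μ u, hρ u⟩
    · obtain ⟨u, rfl⟩ := hσ h
      refine ⟨π u, (μ u)⁻¹, ?_⟩
      rw [hρ u, Representation.twist_apply, smul_smul, inv_mul_cancel₀ (Units.ne_zero _), one_smul]
      rfl
  refine ⟨FDRep.of ρ, μ, (simple_of_iff_finrank_intertwiningMap_self_eq_one ρ).mpr hV, fun u => ?_⟩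
  change LinearMap.trace ℂ _ (ρ (π u)) = _
  rw [hρ u, Representation.twist_apply, map_smul, smul_eq_mul]
  rfl

theorem IsGVZ.of_surjective {U : Type*} {G H : Type} [Group U] [Group G] [Group H] [Finite U]
    [Finite G] [Finite H] {π : U →* G} {σ : U →* H} (hπ : Function.Surjective π)
    (hσ : Function.Surjective σ) (hker : ∀ u ∈ π.ker, σ u ∈ Subgroup.center H)
    (hdisj : Disjoint π.ker (commutator U)) (hG : IsGVZ G) : IsGVZ H := by
  rintro _ ⟨W, hW, rfl⟩ h hh
  obtain ⟨V, μ, hV, hχ⟩ := FDRep.exists_simple_character_eq_mul hπ hσ hker hdisj W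
  obtain ⟨u, rfl⟩ := hσ h
  have hμ : ‖(μ u : ℂ)‖ = 1 :=
    (((Units.coeHom ℂ).comp μ).isOfFinOrder (isOfFinOrder_of_finite u)).norm_eq_one
  have hone : V.character 1 = W.character 1 := by simpa using hχ 1
  have hu : π u ∉ charCenter V.character := fun hu => hh <| by
    change ((‖V.character (π u)‖ : ℝ) : ℂ) = V.character 1 at hu
    change ((‖W.character (σ u)‖ : ℝ) : ℂ) = W.character 1
    rw [← hone, ← hu, hχ, norm_mul, hμ, one_mul]
  have hzero := hG _ ⟨V, hV, rfl⟩ _ hu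
  rw [hχ] at hzero
  exact (mul_eq_zero.mp hzero).resolve_left (Units.ne_zero _)

section Isoclinism

variable {G H : Type*} [Group G] [Group H]
  (θ : (G ⧸ Subgroup.center G) ≃* (H ⧸ Subgroup.center H))

def isoclinismGraph : Subgroup (G × H) :=
  MonoidHom.eqLocus ((θ.toMonoidHom.comp (QuotientGroup.mk' _)).comp (MonoidHom.fst G H))
    ((QuotientGroup.mk' _).comp (MonoidHom.snd G H))

variable {θ} in
theorem mem_isoclinismGraph {p : G × H} :
    p ∈ isoclinismGraph θ ↔ θ (p.1 : G ⧸ Subgroup.center G) = p.2 :=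
  Iff.rfl

theorem surjective_fst_comp_subtype_isoclinismGraph :
    Function.Surjective ((MonoidHom.fst G H).comp (isoclinismGraph θ).subtype) := fun g =>
  ⟨⟨(g, (θ g).out), (QuotientGroup.out_eq' _).symm⟩, rfl⟩

theorem surjective_snd_comp_subtype_isoclinismGraph :
    Function.Surjective ((MonoidHom.snd G H).comp (isoclinismGraph θ).subtype) := fun h =>
  ⟨⟨((θ.symm h).out, h), by rw [mem_isoclinismGraph, QuotientGroup.out_eq', θ.apply_symm_apply]⟩,
    rfl⟩

theorem snd_mem_center_of_mem_ker_fst (u : isoclinismGraph θ)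
    (hu : u ∈ ((MonoidHom.fst G H).comp (isoclinismGraph θ).subtype).ker) :
    (u : G × H).2 ∈ Subgroup.center H := by
  have hu1 : (u : G × H).1 = 1 := hu
  rw [← QuotientGroup.eq_one_iff, ← mem_isoclinismGraph.mp u.2, hu1, QuotientGroup.mk_one,
    map_one]

open scoped commutatorElement in
theorem disjoint_ker_fst_commutator_isoclinismGraph (φ : commutator G ≃* commutator H)
    (hφ : ∀ (g₁ g₂ : G) (h₁ h₂ : H),
      θ (g₁ : G ⧸ Subgroup.center G) = (h₁ : H ⧸ Subgroup.center H) →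
      θ (g₂ : G ⧸ Subgroup.center G) = (h₂ : H ⧸ Subgroup.center H) →
      (φ ⟨⁅g₁, g₂⁆,
          Subgroup.commutator_mem_commutator (Subgroup.mem_top g₁) (Subgroup.mem_top g₂)⟩ : H)
        = ⁅h₁, h₂⁆) :
    Disjoint ((MonoidHom.fst G H).comp (isoclinismGraph θ).subtype).ker
      (commutator (isoclinismGraph θ)) := by
  let Γ := ((commutator G).subtype.prod ((commutator H).subtype.comp φ.toMonoidHom)).range
  have hΓ : ⁅isoclinismGraph θ, isoclinismGraph θ⁆ ≤ Γ := by
    rw [Subgroup.commutator_le]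
    intro p hp q hq
    exact ⟨⟨⁅p.1, q.1⁆, Subgroup.commutator_mem_commutator (Subgroup.mem_top p.1)
      (Subgroup.mem_top q.1)⟩, Prod.ext rfl (hφ _ _ _ _ hp hq)⟩
  rw [Subgroup.disjoint_def]
  intro u hu hu'
  have hu'' : (u : G × H) ∈ ⁅isoclinismGraph θ, isoclinismGraph θ⁆ := by
    rw [← Subgroup.map_subtype_commutator]
    exact Subgroup.mem_map_of_mem _ hu'
  obtain ⟨c, hc⟩ := hΓ hu''
  have hc1 : c = 1 := Subtype.ext <| (congrArg Prod.fst hc).trans hu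
  apply Subtype.ext
  change (u : G × H) = 1
  rw [← show _ = (u : G × H) from hc, hc1, map_one]

end Isoclinism

/-- If `G` and `H` are finite isoclinic groups and `G` is a GVZ-group,
then `H` is a GVZ-group. -/
theorem isoclinic_GVZ {G H : Type} [Group G] [Group H] [Finite G] [Finite H]
    (hiso : Isoclinic G H) (hG : IsGVZ G) : IsGVZ H := by
  obtain ⟨θ, φ, hφ⟩ := hiso
  exact hG.of_surjective (surjective_fst_comp_subtype_isoclinismGraph θ)
    (surjective_snd_comp_subtype_isoclinismGraph θ) (snd_mem_center_of_mem_ker_fst θ)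
    (disjoint_ker_fst_commutator_isoclinismGraph θ φ hφ)
end
end

section
/- Let p be an odd prime, γ ≥ 1, 0 ≤ ρ ≤ γ, and let G = ⟨a, b | [a,b]^{p^γ} = [[a,b],a] = [[a,b],b] = 1, a^{p^γ} = [a,b]^{p^ρ}, b^{p^γ} = 1⟩ (the group G_{(γ,γ,γ;ρ,γ)}). For each 1 ≤ δ ≤ γ, the abelian quotient ⟨a^{p^δ}, b^{p^δ}, [a,b]⟩/⟨[a,b]^{p^δ}⟩ is isomorphic to C_{p^{γ−ρ}} × C_{p^{γ−δ}} × C_{p^ρ} if ρ < δ < γ−ρ, and to C_{p^{γ−δ}} × C_{p^{γ−δ}} × C_{p^δ} otherwise. -/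
/-!
Write `c = [a, b]`. It is central, so `G/⟨c⟩` is abelian, `Z = ⟨a^{p^δ}, b^{p^δ}, c⟩` is normal,
and `G/Z` is a quotient of `C_{p^δ} × C_{p^δ}`. Since also `|⟨c^{p^δ}⟩| ≤ p^{γ-δ}`, counting gives
`|Z/⟨c^{p^δ}⟩| ≥ p^{3γ} / (p^{2δ} p^{γ-δ}) = p^{2γ-δ}`.

The quotient is abelian, generated by the images `x, y, z` of the three generators, with
`y^{p^{γ-δ}} = z^{p^δ} = 1` and `x^{p^{γ-δ}} = z^{p^ρ}`. If `ρ < δ < γ-ρ`, replace `z` by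
`z x^{-p^{γ-δ-ρ}}`, of order dividing `p^ρ`; if `γ-δ ≤ ρ`, replace `x` by `x z^{-p^{ρ-γ+δ}}`, of
order dividing `p^{γ-δ}`; if `δ ≤ ρ`, already `x^{p^{γ-δ}} = 1`. In each case the new generators
have orders dividing numbers whose product is `p^{2γ-δ}`, so the natural surjection onto the
quotient from the corresponding product of cyclic groups is an isomorphism.
-/

set_option autoImplicit false

open scoped commutatorElement

noncomputable section

/-- The subgroup `⟨a^{p^δ}, b^{p^δ}, [a,b]⟩`. -/
def Zsub {G : Type} [Group G] (a b : G) (p δ : ℕ) : Subgroup G :=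
  Subgroup.closure {a ^ p ^ δ, b ^ p ^ δ, ⁅a, b⁆}

/-- The subgroup `⟨[a,b]^{p^k}⟩`. -/
def Ksub {G : Type} [Group G] (a b : G) (p k : ℕ) : Subgroup G :=
  Subgroup.closure {⁅a, b⁆ ^ p ^ k}

/-- The cyclic group of order `m`. -/
abbrev Cyc (m : ℕ) : Type := Multiplicative (ZMod m)

open Subgroup

section CyclicHom

variable {H : Type*} [Group H]

def cycHom (h : H) {n : ℕ} (hn : h ^ n = 1) : Cyc n →* H :=
  MonoidHom.toAdditiveRight.symm
    (ZMod.lift n ⟨zmultiplesHom (Additive H) (Additive.ofMul h), by simp [← ofMul_pow, hn]⟩)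

theorem cycHom_ofAdd_intCast (h : H) {n : ℕ} (hn : h ^ n = 1) (k : ℤ) :
    cycHom h hn (Multiplicative.ofAdd (k : ZMod n)) = h ^ k := by
  simp [cycHom]

theorem range_cycHom (h : H) {n : ℕ} (hn : h ^ n = 1) : (cycHom h hn).range = zpowers h := by
  ext g
  constructor
  · rintro ⟨x, rfl⟩
    obtain ⟨k, hk⟩ := ZMod.intCast_surjective x.toAdd
    rw [← ofAdd_toAdd x, ← hk, cycHom_ofAdd_intCast]
    exact zpow_mem_zpowers h k
  · rintro ⟨k, rfl⟩
    exact ⟨_, cycHom_ofAdd_intCast h hn k⟩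

end CyclicHom

section Commutative

variable {H : Type*} [Group H]

theorem isMulCommutative_of_closure_eq_top {s : Set H} (hs : closure s = ⊤)
    (hcomm : ∀ x ∈ s, ∀ y ∈ s, x * y = y * x) : IsMulCommutative H := by
  have := isMulCommutative_closure hcomm
  rw [hs] at this
  exact ⟨⟨fun x y => congrArg Subtype.val
    (mul_comm' (⟨x, mem_top x⟩ : (⊤ : Subgroup H)) ⟨y, mem_top y⟩)⟩⟩

theorem isMulCommutative_of_closure_pair_eq_top {x y : H} (hs : closure {x, y} = ⊤)
    (hxy : Commute x y) : IsMulCommutative H := by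
  refine isMulCommutative_of_closure_eq_top hs ?_
  rintro s (rfl | rfl) t (rfl | rfl)
  exacts [rfl, hxy, hxy.symm, rfl]

theorem isMulCommutative_of_closure_triple_eq_top {x y z : H} (hs : closure {x, y, z} = ⊤)
    (hxy : Commute x y) (hxz : Commute x z) (hyz : Commute y z) : IsMulCommutative H := by
  refine isMulCommutative_of_closure_eq_top hs ?_
  rintro s (rfl | rfl | rfl) t (rfl | rfl | rfl)
  exacts [rfl, hxy, hxz, hxy.symm, rfl, hyz, hxz.symm, hyz.symm, rfl]

open scoped IsMulCommutative

variable [IsMulCommutative H] {u v w : H} {l m n : ℕ}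

def cycHom₂ (hu : u ^ m = 1) (hv : v ^ n = 1) : Cyc m × Cyc n →* H :=
  (cycHom u hu).noncommCoprod (cycHom v hv) fun _ _ => .all _ _

theorem range_cycHom₂ (hu : u ^ m = 1) (hv : v ^ n = 1) :
    (cycHom₂ hu hv).range = closure {u, v} := by
  rw [cycHom₂, MonoidHom.noncommCoprod_range, range_cycHom, range_cycHom, Set.insert_eq,
    Subgroup.closure_union, zpowers_eq_closure, zpowers_eq_closure]

def cycHom₃ (hu : u ^ l = 1) (hv : v ^ m = 1) (hw : w ^ n = 1) : Cyc l × Cyc m × Cyc n →* H :=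
  (cycHom u hu).noncommCoprod (cycHom₂ hv hw) fun _ _ => .all _ _

theorem range_cycHom₃ (hu : u ^ l = 1) (hv : v ^ m = 1) (hw : w ^ n = 1) :
    (cycHom₃ hu hv hw).range = closure {u, v, w} := by
  rw [cycHom₃, MonoidHom.noncommCoprod_range, range_cycHom, range_cycHom₂, Set.insert_eq u,
    Subgroup.closure_union, zpowers_eq_closure]

theorem card_le_mul_of_closure_pair_eq_top [NeZero m] [NeZero n] (hu : u ^ m = 1) (hv : v ^ n = 1)
    (hgen : closure {u, v} = ⊤) : Nat.card H ≤ m * n := by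
  have hsurj : Function.Surjective (cycHom₂ hu hv) := by
    rw [← MonoidHom.range_eq_top, range_cycHom₂, hgen]
  simpa using Nat.card_le_card_of_surjective _ hsurj

theorem nonempty_mulEquiv_cyc_of_closure_triple_eq_top [NeZero l] [NeZero m] [NeZero n]
    (hu : u ^ l = 1) (hv : v ^ m = 1) (hw : w ^ n = 1) (hgen : closure {u, v, w} = ⊤)
    (hcard : l * m * n ≤ Nat.card H) : Nonempty (H ≃* Cyc l × Cyc m × Cyc n) := by
  have hsurj : Function.Surjective (cycHom₃ hu hv hw) := by
    rw [← MonoidHom.range_eq_top, range_cycHom₃, hgen]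
  have hcard' : Nat.card (Cyc l × Cyc m × Cyc n) = Nat.card H := by
    refine le_antisymm ?_ (Nat.card_le_card_of_surjective _ hsurj)
    simpa [mul_assoc] using hcard
  exact ⟨(MulEquiv.ofBijective _
    ((Nat.bijective_iff_surjective_and_card _).mpr ⟨hsurj, hcard'⟩)).symm⟩

end Commutative

section ThreeGenerators

open scoped IsMulCommutative

variable {H : Type*} [Group H] {x y z : H} {p e d r : ℕ} [NeZero p]

theorem nonempty_mulEquiv_cyc_of_lt (hgen : closure {x, y, z} = ⊤) (hxy : Commute x y)
    (hxz : Commute x z) (hyz : Commute y z) (hx : x ^ p ^ e = z ^ p ^ r) (hy : y ^ p ^ e = 1)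
    (hz : z ^ p ^ d = 1) (hcard : p ^ (2 * e + d) ≤ Nat.card H) (hrd : r < d) (hre : r < e) :
    Nonempty (H ≃* Cyc (p ^ (e + d - r)) × Cyc (p ^ e) × Cyc (p ^ r)) := by
  have := isMulCommutative_of_closure_triple_eq_top hgen hxy hxz hyz
  set w := z * (x ^ p ^ (e - r))⁻¹ with hw
  refine nonempty_mulEquiv_cyc_of_closure_triple_eq_top (u := x) (v := y) (w := w) ?_ hy ?_ ?_ ?_
  · rw [show e + d - r = e + (d - r) by omega, pow_add, pow_mul, hx, ← pow_mul, ← pow_add,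
      Nat.add_sub_cancel' hrd.le, hz]
  · rw [mul_pow, inv_pow, ← pow_mul, ← pow_add, Nat.sub_add_cancel hre.le, hx, mul_inv_cancel]
  · rw [eq_top_iff, ← hgen, closure_le]
    have hz' : z = w * x ^ p ^ (e - r) := by rw [hw, inv_mul_cancel_right]
    rintro g (rfl | rfl | rfl)
    · exact subset_closure (by simp)
    · exact subset_closure (by simp)
    · rw [SetLike.mem_coe, hz']
      exact mul_mem (subset_closure (by simp)) (pow_mem (subset_closure (by simp)) _)
  · calc p ^ (e + d - r) * p ^ e * p ^ r = p ^ (2 * e + d) := by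
          rw [← pow_add, ← pow_add]; congr 1; omega
      _ ≤ Nat.card H := hcard

theorem nonempty_mulEquiv_cyc_of_le (hgen : closure {x, y, z} = ⊤) (hxy : Commute x y)
    (hxz : Commute x z) (hyz : Commute y z) (hx : x ^ p ^ e = z ^ p ^ r) (hy : y ^ p ^ e = 1)
    (hz : z ^ p ^ d = 1) (hcard : p ^ (2 * e + d) ≤ Nat.card H) (hr : d ≤ r ∨ e ≤ r) :
    Nonempty (H ≃* Cyc (p ^ e) × Cyc (p ^ e) × Cyc (p ^ d)) := by
  have := isMulCommutative_of_closure_triple_eq_top hgen hxy hxz hyz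
  have hcard' : p ^ e * p ^ e * p ^ d ≤ Nat.card H := by
    rwa [← pow_add, ← pow_add, ← two_mul]
  rcases hr with hdr | her
  · refine nonempty_mulEquiv_cyc_of_closure_triple_eq_top ?_ hy hz hgen hcard'
    rw [hx, ← Nat.add_sub_cancel' hdr, pow_add, pow_mul, hz, one_pow]
  · set u := x * (z ^ p ^ (r - e))⁻¹ with hu
    refine nonempty_mulEquiv_cyc_of_closure_triple_eq_top (u := u) ?_ hy hz ?_ hcard'
    · rw [mul_pow, inv_pow, ← pow_mul, ← pow_add, Nat.sub_add_cancel her, hx, mul_inv_cancel]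
    · rw [eq_top_iff, ← hgen, closure_le]
      have hx' : x = u * z ^ p ^ (r - e) := by rw [hu, inv_mul_cancel_right]
      rintro g (rfl | rfl | rfl)
      · rw [SetLike.mem_coe, hx']
        exact mul_mem (subset_closure (by simp)) (pow_mem (subset_closure (by simp)) _)
      · exact subset_closure (by simp)
      · exact subset_closure (by simp)

end ThreeGenerators

section ClassTwo

variable {G : Type*} [Group G] {a b : G}

theorem commute_of_closure_pair_eq_top {c : G} (hgen : closure {a, b} = ⊤) (ha : Commute c a)
    (hb : Commute c b) (g : G) : Commute c g := by
  have : closure {a, b} ≤ centralizer {c} := by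
    rw [closure_le]
    rintro x (rfl | rfl)
    exacts [mem_centralizer_singleton_iff.mpr ha.eq.symm,
      mem_centralizer_singleton_iff.mpr hb.eq.symm]
  rw [hgen] at this
  exact (mem_centralizer_singleton_iff.mp (this (mem_top g))).symm

theorem commutatorElement_pow_right (h : Commute ⁅a, b⁆ b) (n : ℕ) : ⁅a, b ^ n⁆ = ⁅a, b⁆ ^ n := by
  induction n with
  | zero => simp
  | succ n ih =>
    rw [pow_succ, commutatorElement_mul_right_eq_mul_conj, ih, mul_assoc, mul_assoc,
      ← mul_assoc (b ^ n), ← (h.pow_right n).eq, mul_inv_cancel_right, pow_succ]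

theorem commutatorElement_pow_left (h : Commute ⁅a, b⁆ a) (m : ℕ) : ⁅a ^ m, b⁆ = ⁅a, b⁆ ^ m := by
  have h' : Commute ⁅b, a⁆ a := by
    rw [← commutatorElement_inv]
    exact h.inv_left
  rw [← commutatorElement_inv, commutatorElement_pow_right h', ← inv_pow, commutatorElement_inv]

theorem commutatorElement_pow_pow (ha : Commute ⁅a, b⁆ a) (hb : Commute ⁅a, b⁆ b) (m n : ℕ) :
    ⁅a ^ m, b ^ n⁆ = ⁅a, b⁆ ^ (m * n) := by
  have h' : Commute ⁅a, b ^ n⁆ a := by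
    rw [commutatorElement_pow_right hb]
    exact ha.pow_left n
  rw [commutatorElement_pow_left h', commutatorElement_pow_right hb, ← pow_mul, mul_comm]

theorem closure_pair_coe_eq_top {K : Subgroup G} [K.Normal] (hgen : closure {a, b} = ⊤) :
    closure {(a : G ⧸ K), (b : G ⧸ K)} = ⊤ := by
  rw [← Set.image_pair, ← QuotientGroup.coe_mk', ← MonoidHom.map_closure, hgen,
    ← MonoidHom.range_eq_map, QuotientGroup.range_mk']

theorem isMulCommutative_quotient_of_commutatorElement_mem {K : Subgroup G} [K.Normal]
    (hgen : closure {a, b} = ⊤) (hab : ⁅a, b⁆ ∈ K) : IsMulCommutative (G ⧸ K) := by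
  refine isMulCommutative_of_closure_pair_eq_top (closure_pair_coe_eq_top hgen) ?_
  rw [← commutatorElement_eq_one_iff_commute]
  exact (map_commutatorElement (QuotientGroup.mk' K) a b).symm.trans
    ((QuotientGroup.eq_one_iff _).mpr hab)

theorem commutator_le_zpowers_commutatorElement (hgen : closure {a, b} = ⊤)
    (hc : ∀ g, Commute ⁅a, b⁆ g) : commutator G ≤ zpowers ⁅a, b⁆ := by
  have : (zpowers ⁅a, b⁆).Normal := ⟨fun n hn g => by
    obtain ⟨k, rfl⟩ := mem_zpowers_iff.mp hn
    rwa [← ((hc g).zpow_left k).eq, mul_inv_cancel_right]⟩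
  exact Normal.quotient_commutative_iff_commutator_le.mp
    (isMulCommutative_quotient_of_commutatorElement_mem hgen (mem_zpowers _))

theorem index_le_mul_of_closure_pair_eq_top {K : Subgroup G} [K.Normal] {m n : ℕ} [NeZero m]
    [NeZero n] (hgen : closure {a, b} = ⊤) (hab : ⁅a, b⁆ ∈ K) (ha : a ^ m ∈ K) (hb : b ^ n ∈ K) :
    K.index ≤ m * n := by
  have := isMulCommutative_quotient_of_commutatorElement_mem hgen hab
  exact card_le_mul_of_closure_pair_eq_top ((QuotientGroup.eq_one_iff _).mpr ha)
    ((QuotientGroup.eq_one_iff _).mpr hb) (closure_pair_coe_eq_top hgen)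

end ClassTwo

section Presentation

variable {G : Type} [Group G] {p γ ρ δ : ℕ} {a b : G}

theorem ksub_le_zsub : Ksub a b p δ ≤ Zsub a b p δ :=
  (closure_le _).mpr (Set.singleton_subset_iff.mpr (pow_mem (subset_closure (by simp)) _))

theorem index_zsub_le [NeZero p] (hgen : closure {a, b} = ⊤) (hc : ∀ g, Commute ⁅a, b⁆ g) :
    (Zsub a b p δ).index ≤ p ^ δ * p ^ δ := by
  have : (Zsub a b p δ).Normal := Normal.of_commutator_le G
    ((commutator_le_zpowers_commutatorElement hgen hc).trans
      (zpowers_le.mpr (subset_closure (by simp))))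
  exact index_le_mul_of_closure_pair_eq_top hgen (subset_closure (by simp))
    (subset_closure (by simp)) (subset_closure (by simp))

theorem card_ksub_le [NeZero p] (h1 : ⁅a, b⁆ ^ p ^ γ = 1) (hδ : δ ≤ γ) :
    Nat.card (Ksub a b p δ) ≤ p ^ (γ - δ) := by
  rw [Ksub, ← zpowers_eq_closure, Nat.card_zpowers]
  refine orderOf_le_of_pow_eq_one (Nat.pos_of_neZero _) ?_
  rw [← pow_mul, ← pow_add, Nat.add_sub_cancel' hδ, h1]

theorem le_card_quotient_zsub [NeZero p] (hgen : closure {a, b} = ⊤) (hc : ∀ g, Commute ⁅a, b⁆ g)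
    (h1 : ⁅a, b⁆ ^ p ^ γ = 1) (hcard : Nat.card G = p ^ (3 * γ)) (hδ : δ ≤ γ)
    [((Ksub a b p δ).subgroupOf (Zsub a b p δ)).Normal] :
    p ^ (2 * (γ - δ) + δ) ≤
      Nat.card (Zsub a b p δ ⧸ (Ksub a b p δ).subgroupOf (Zsub a b p δ)) := by
  have hK : Nat.card ((Ksub a b p δ).subgroupOf (Zsub a b p δ)) ≤ p ^ (γ - δ) := by
    rw [Nat.card_congr (subgroupOfEquivOfLe ksub_le_zsub).toEquiv]
    exact card_ksub_le h1 hδ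
  have hG : Nat.card G = Nat.card (Zsub a b p δ ⧸ (Ksub a b p δ).subgroupOf (Zsub a b p δ)) *
      (Nat.card ((Ksub a b p δ).subgroupOf (Zsub a b p δ)) * (Zsub a b p δ).index) := by
    rw [← card_mul_index (Zsub a b p δ), card_eq_card_quotient_mul_card_subgroup
      ((Ksub a b p δ).subgroupOf (Zsub a b p δ))]
    ring
  refine Nat.le_of_mul_le_mul_right (c := p ^ (γ - δ) * (p ^ δ * p ^ δ)) ?_ (Nat.pos_of_neZero _)
  calc p ^ (2 * (γ - δ) + δ) * (p ^ (γ - δ) * (p ^ δ * p ^ δ)) = Nat.card G := by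
        rw [hcard, ← pow_add, ← pow_add, ← pow_add]; congr 1; omega
    _ ≤ _ := hG ▸ Nat.mul_le_mul_left _ (Nat.mul_le_mul hK (index_zsub_le hgen hc))

theorem closure_mk_triple_eq_top (g₁ g₂ g₃ : G) (N : Subgroup (closure {g₁, g₂, g₃}))
    [hN : N.Normal] :
    closure {QuotientGroup.mk' N ⟨g₁, subset_closure (by simp)⟩,
      QuotientGroup.mk' N ⟨g₂, subset_closure (by simp)⟩,
      QuotientGroup.mk' N ⟨g₃, subset_closure (by simp)⟩} = ⊤ := by
  have hpre : ((↑) : closure {g₁, g₂, g₃} → G) ⁻¹' {g₁, g₂, g₃} =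
      {⟨g₁, subset_closure (by simp)⟩, ⟨g₂, subset_closure (by simp)⟩,
        ⟨g₃, subset_closure (by simp)⟩} := by
    ext ⟨g, hg⟩
    simp [Subtype.ext_iff]
  rw [← Set.image_pair, ← Set.image_insert_eq, ← hpre, ← MonoidHom.map_closure,
    closure_closure_coe_preimage, ← MonoidHom.range_eq_map, QuotientGroup.range_mk']

theorem exists_generators_quotient_zsub (hc : ∀ g, Commute ⁅a, b⁆ g)
    (h4 : a ^ p ^ γ = ⁅a, b⁆ ^ p ^ ρ) (h5 : b ^ p ^ γ = 1) (hδ : δ ≤ γ)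
    [((Ksub a b p δ).subgroupOf (Zsub a b p δ)).Normal] :
    ∃ x y z : Zsub a b p δ ⧸ (Ksub a b p δ).subgroupOf (Zsub a b p δ),
      closure {x, y, z} = ⊤ ∧ Commute x y ∧ Commute x z ∧ Commute y z ∧
        x ^ p ^ (γ - δ) = z ^ p ^ ρ ∧ y ^ p ^ (γ - δ) = 1 ∧ z ^ p ^ δ = 1 := by
  set π := QuotientGroup.mk' ((Ksub a b p δ).subgroupOf (Zsub a b p δ))
  have hπ (g : Zsub a b p δ) (hg : (g : G) ∈ Ksub a b p δ) : π g = 1 :=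
    (QuotientGroup.eq_one_iff g).mpr (mem_subgroupOf.mpr hg)
  have hcp : ⁅a, b⁆ ^ p ^ δ ∈ Ksub a b p δ := subset_closure rfl
  let A : Zsub a b p δ := ⟨a ^ p ^ δ, subset_closure (by simp)⟩
  let B : Zsub a b p δ := ⟨b ^ p ^ δ, subset_closure (by simp)⟩
  let C : Zsub a b p δ := ⟨⁅a, b⁆, subset_closure (by simp)⟩
  -- the normality instance is stated for `Zsub`, so it is found only after unfolding to `closure`
  refine ⟨π A, π B, π C, closure_mk_triple_eq_top _ _ _ _ (hN := ‹_›), ?_, ?_, ?_, ?_, ?_, ?_⟩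
  · rw [← commutatorElement_eq_one_iff_commute, ← map_commutatorElement]
    refine hπ _ ?_
    change ⁅a ^ p ^ δ, b ^ p ^ δ⁆ ∈ _
    rw [commutatorElement_pow_pow (hc a) (hc b), pow_mul]
    exact pow_mem hcp _
  · exact Commute.map (show Commute A C from Subtype.ext (hc _).eq.symm) π
  · exact Commute.map (show Commute B C from Subtype.ext (hc _).eq.symm) π
  · rw [← map_pow, ← map_pow]
    congr 1
    refine Subtype.ext ?_
    change (a ^ p ^ δ) ^ p ^ (γ - δ) = ⁅a, b⁆ ^ p ^ ρ
    rw [← pow_mul, ← pow_add, Nat.add_sub_cancel' hδ, h4]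
  · rw [← map_pow]
    refine hπ _ ?_
    change (b ^ p ^ δ) ^ p ^ (γ - δ) ∈ _
    rw [← pow_mul, ← pow_add, Nat.add_sub_cancel' hδ, h5]
    exact one_mem _
  · rw [← map_pow]
    exact hπ _ hcp

end Presentation

/-- For the group `G = G_{(γ,γ,γ;ρ,γ)}`, the quotient
`⟨a^{p^δ}, b^{p^δ}, [a,b]⟩ / ⟨[a,b]^{p^δ}⟩` is isomorphic to
`C_{p^{γ-ρ}} × C_{p^{γ-δ}} × C_{p^ρ}` if `ρ < δ < γ-ρ`, and to
`C_{p^{γ-δ}} × C_{p^{γ-δ}} × C_{p^δ}` otherwise. -/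
theorem quotient_structure_tau5 {G : Type} [Group G] {p γ ρ : ℕ}
    (hp : p.Prime) (hodd : Odd p) (hγ : 1 ≤ γ) (hρ : ρ ≤ γ)
    (a b : G)
    (h1 : ⁅a, b⁆ ^ p ^ γ = 1)
    (h2 : ⁅⁅a, b⁆, a⁆ = 1)
    (h3 : ⁅⁅a, b⁆, b⁆ = 1)
    (h4 : a ^ p ^ γ = ⁅a, b⁆ ^ p ^ ρ)
    (h5 : b ^ p ^ γ = 1)
    (hgen : Subgroup.closure {a, b} = ⊤)
    (hcard : Nat.card G = p ^ (3 * γ))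
    [∀ k δ : ℕ, ((Ksub a b p k).subgroupOf (Zsub a b p δ)).Normal]
    (δ : ℕ) (hδ1 : 1 ≤ δ) (hδ2 : δ ≤ γ) :
    ((ρ < δ ∧ δ < γ - ρ) →
      Nonempty ((Zsub a b p δ ⧸ (Ksub a b p δ).subgroupOf (Zsub a b p δ)) ≃*
        (Cyc (p ^ (γ - ρ)) × Cyc (p ^ (γ - δ)) × Cyc (p ^ ρ)))) ∧
    (¬ (ρ < δ ∧ δ < γ - ρ) →
      Nonempty ((Zsub a b p δ ⧸ (Ksub a b p δ).subgroupOf (Zsub a b p δ)) ≃*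
        (Cyc (p ^ (γ - δ)) × Cyc (p ^ (γ - δ)) × Cyc (p ^ δ)))) := by
  have : NeZero p := ⟨hp.ne_zero⟩
  have hc := commute_of_closure_pair_eq_top hgen (commutatorElement_eq_one_iff_commute.mp h2)
    (commutatorElement_eq_one_iff_commute.mp h3)
  have hH := le_card_quotient_zsub hgen hc h1 hcard hδ2
  obtain ⟨x, y, z, hxyz, hxy, hxz, hyz, hx, hy, hz⟩ := exists_generators_quotient_zsub hc h4 h5 hδ2
  refine ⟨fun h => ?_, fun h => nonempty_mulEquiv_cyc_of_le hxyz hxy hxz hyz hx hy hz hH (by omega)⟩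
  rw [show γ - ρ = γ - δ + δ - ρ by omega]
  exact nonempty_mulEquiv_cyc_of_lt hxyz hxy hxz hyz hx hy hz hH (by omega) (by omega)
end
end
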